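/- arXiv:1212.6842 — 5 statements merged into one kernel-verified Lean document; each statement's English description precedes it below -/
import Mathlib

section
/- Every ℚ-vector space of countable dimension equipped with a valuation v into a linearly ordered value set (satisfying v(x) = ∞ iff x = 0, v(qx) = v(x) for nonzero rational q, and v(x+y) ≥ min(v(x), v(y))) admits a valuation basis, i.e., a basis {g_i} such that v(Σ qᵢgᵢ) = min{v(gᵢ) : qᵢ ≠ 0} for all finite rational combinations. -/
/-!
A Gram–Schmidt process for valuations. If `v` takes only finitely many values on a subspace `W`,
then for every `x` the values `v (x + w)`, `w ∈ W`, are finite in number as well: two distinct ones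
have as minimum `v` of the difference, which lies in `W`. So some `x + u` with `u ∈ W` has maximal
value, and maximality makes it orthogonal to `W`, i.e. `v (x + u + w) = min (v (x + u)) (v w)`.
Applying this to a spanning sequence `e₀, e₁, …`, each `eₙ` corrected against the span of the
earlier corrected vectors, gives a sequence whose finite combinations have value the minimum of
the values of their terms; the nonzero terms form a valuation basis.
-/

open Submodule Function

variable {K V Γ₀ : Type*} [DivisionRing K] [AddCommGroup V] [Module K V] [LinearOrder Γ₀]

def IsValOrthogonal (v : V → Γ₀) (y : V) (W : Submodule K V) : Prop :=
  ∀ w ∈ W, v (y + w) = min (v y) (v w)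

section ValGramSchmidt

variable (K) (v : V → Γ₀) (e : ℕ → V)

/-- Only meaningful when `v` takes finitely many values on `W` (see `valCorrection_spec`). -/
noncomputable def valCorrection (W : Submodule K V) (x : V) : V :=
  Classical.epsilon fun u => u ∈ W ∧ IsValOrthogonal v (x + u) W

noncomputable def valGramSchmidtSpan : ℕ → Submodule K V
  | 0 => ⊥
  | n + 1 => valGramSchmidtSpan n ⊔ K ∙ (e n + valCorrection K v (valGramSchmidtSpan n) (e n))

noncomputable def valGramSchmidt (n : ℕ) : V :=
  e n + valCorrection K v (valGramSchmidtSpan K v e n) (e n)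

theorem monotone_valGramSchmidtSpan : Monotone (valGramSchmidtSpan K v e) :=
  monotone_nat_of_le_succ fun _ => le_sup_left

theorem valGramSchmidt_mem_valGramSchmidtSpan {i m : ℕ} (h : i < m) :
    valGramSchmidt K v e i ∈ valGramSchmidtSpan K v e m :=
  monotone_valGramSchmidtSpan K v e h (mem_sup_right (mem_span_singleton_self _))

theorem valGramSchmidtSpan_le_span (n : ℕ) :
    valGramSchmidtSpan K v e n ≤ span K (Set.range (valGramSchmidt K v e)) := by
  induction n with
  | zero => exact bot_le
  | succ n ih => exact sup_le ih (span_mono (Set.singleton_subset_iff.2 (Set.mem_range_self n)))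

end ValGramSchmidt

variable [OrderTop Γ₀]

variable (K) in
structure IsVectorValuation (v : V → Γ₀) : Prop where
  eq_top_iff : ∀ x, v x = ⊤ ↔ x = 0
  map_smul : ∀ c : K, c ≠ 0 → ∀ x, v (c • x) = v x
  min_le_map_add : ∀ x y, min (v x) (v y) ≤ v (x + y)

variable (K) in
def IsValuationIndependent {ι : Type*} (v : V → Γ₀) (g : ι → V) : Prop :=
  ∀ (s : Finset ι) (q : ι → K), v (∑ i ∈ s, q i • g i) = s.inf fun i => v (q i • g i)

namespace IsVectorValuation

variable {v : V → Γ₀}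

theorem map_zero (hv : IsVectorValuation K v) : v 0 = ⊤ := (hv.eq_top_iff 0).2 rfl

theorem map_neg (hv : IsVectorValuation K v) (x : V) : v (-x) = v x := by
  simpa using hv.map_smul (-1) (by simp) x

theorem map_add_eq_min_of_map_add_le (hv : IsVectorValuation K v) {x w : V}
    (h : v (x + w) ≤ v x) : v (x + w) = min (v x) (v w) := by
  refine le_antisymm (le_min h ?_) (hv.min_le_map_add x w)
  calc v (x + w) = min (v (x + w)) (v (-x)) := by rw [hv.map_neg, min_eq_left h]
    _ ≤ v (x + w + -x) := hv.min_le_map_add _ _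
    _ = v w := by rw [add_neg_cancel_comm]

theorem map_add_eq_min_of_ne (hv : IsVectorValuation K v) {x y : V} (h : v x ≠ v y) :
    v (x + y) = min (v x) (v y) := by
  refine le_antisymm ?_ (hv.min_le_map_add x y)
  by_contra! hlt
  rcases h.lt_or_gt with hxy | hxy
  · have := hv.min_le_map_add (x + y) (-y)
    rw [hv.map_neg, add_neg_cancel_right] at this
    exact (this.trans_lt (lt_min (by simpa [hxy.le] using hlt) hxy)).false
  · have := hv.min_le_map_add (x + y) (-x)
    rw [hv.map_neg, add_neg_cancel_comm] at this
    exact (this.trans_lt (lt_min (by simpa [hxy.le] using hlt) hxy)).false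

theorem finite_image_add (hv : IsVectorValuation K v) {W : Submodule K V}
    (hW : (v '' W).Finite) (x : V) :
    ((fun w => v (x + w)) '' W).Finite := by
  refine Set.Finite.of_sdiff (Set.Subsingleton.finite ?_) hW
  rintro _ ⟨⟨u₁, hu₁, rfl⟩, hu₁W⟩ _ ⟨⟨u₂, hu₂, rfl⟩, hu₂W⟩
  by_contra hne
  have hmin : min (v (x + u₁)) (v (x + u₂)) ∈ v '' W := by
    refine ⟨u₁ - u₂, W.sub_mem hu₁ hu₂, ?_⟩
    rw [← hv.map_neg (x + u₂), ← hv.map_add_eq_min_of_ne (by rwa [hv.map_neg])]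
    congr 1
    abel
  rcases min_choice (v (x + u₁)) (v (x + u₂)) with h | h <;> rw [h] at hmin
  exacts [hu₁W hmin, hu₂W hmin]

theorem exists_isValOrthogonal_add (hv : IsVectorValuation K v) {W : Submodule K V}
    (hW : (v '' W).Finite) (x : V) :
    ∃ u ∈ W, IsValOrthogonal v (x + u) W := by
  obtain ⟨_, ⟨u, hu, rfl⟩, hmax⟩ := Set.exists_max_image _ id (hv.finite_image_add hW x)
    ⟨_, 0, W.zero_mem, rfl⟩
  refine ⟨u, hu, fun w hw => hv.map_add_eq_min_of_map_add_le ?_⟩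
  rw [add_assoc]
  exact hmax _ ⟨u + w, W.add_mem hu hw, rfl⟩

theorem _root_.IsValOrthogonal.map_smul_add {y : V} {W : Submodule K V}
    (h : IsValOrthogonal v y W) (hv : IsVectorValuation K v) (c : K) {w : V} (hw : w ∈ W) :
    v (c • y + w) = min (v (c • y)) (v w) := by
  rcases eq_or_ne c 0 with rfl | hc
  · simp [hv.map_zero]
  · have : c • y + w = c • (y + c⁻¹ • w) := by rw [smul_add, smul_inv_smul₀ hc]
    rw [this, hv.map_smul c hc, hv.map_smul c hc, h _ (W.smul_mem _ hw),
      hv.map_smul c⁻¹ (inv_ne_zero hc)]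

theorem image_sup_span_singleton_subset (hv : IsVectorValuation K v) {y : V}
    {W : Submodule K V} (h : IsValOrthogonal v y W) :
    v '' ↑(W ⊔ K ∙ y) ⊆ insert (v y) (v '' W) := by
  rintro _ ⟨_, hz, rfl⟩
  obtain ⟨w, hw, _, hcy, rfl⟩ := mem_sup.1 hz
  obtain ⟨c, rfl⟩ := mem_span_singleton.1 hcy
  rw [add_comm, h.map_smul_add hv c hw]
  rcases min_choice (v (c • y)) (v w) with hmin | hmin <;> rw [hmin]
  · rcases eq_or_ne c 0 with rfl | hc
    · exact Or.inr ⟨0, W.zero_mem, by rw [zero_smul]⟩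
    · exact Or.inl (hv.map_smul c hc y)
  · exact Or.inr ⟨w, hw, rfl⟩

theorem linearIndependent_of_isValuationIndependent (hv : IsVectorValuation K v) {ι : Type*}
    {g : ι → V} (hg : IsValuationIndependent K v g) (hg0 : ∀ i, g i ≠ 0) :
    LinearIndependent K g := by
  refine linearIndependent_iff'.2 fun s q hsum i hi => ?_
  have htop := hg s q
  rw [hsum, hv.map_zero, eq_comm, Finset.inf_eq_top_iff] at htop
  exact (smul_eq_zero.1 ((hv.eq_top_iff _).1 (htop i hi))).resolve_right (hg0 i)

theorem isValuationIndependent_of_isValOrthogonal (hv : IsVectorValuation K v) {g : ℕ → V}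
    {W : ℕ → Submodule K V} (hmem : ∀ i m, i < m → g i ∈ W m)
    (horth : ∀ m, IsValOrthogonal v (g m) (W m)) :
    IsValuationIndependent K v g := by
  intro s q
  induction s using Finset.induction_on_max with
  | empty => simp [hv.map_zero]
  | insert m s hlt ih =>
    have hsum : ∑ i ∈ s, q i • g i ∈ W m :=
      sum_mem fun i hi => (W m).smul_mem _ (hmem i m (hlt i hi))
    rw [Finset.sum_insert fun hm => (hlt m hm).false, Finset.inf_insert,
      (horth m).map_smul_add hv _ hsum, ih]

end IsVectorValuation

theorem IsValuationIndependent.comp {ι κ : Type*} {v : V → Γ₀} {g : ι → V}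
    (hg : IsValuationIndependent K v g) {f : κ → ι} (hf : Injective f) :
    IsValuationIndependent K v (g ∘ f) := by
  intro s q
  have := hg (s.map ⟨f, hf⟩) (extend f q 0)
  simpa [Finset.sum_map, Finset.inf_map, comp_def, hf.extend_apply] using this

theorem span_range_subtype_ne_zero {ι : Type*} (g : ι → V) :
    span K (Set.range fun i : {i // g i ≠ 0} => g i) = span K (Set.range g) := by
  rw [← span_sdiff_singleton_zero (s := Set.range g)]
  congr 1
  ext x
  constructor
  · rintro ⟨i, rfl⟩
    exact ⟨⟨i, rfl⟩, i.2⟩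
  · rintro ⟨⟨i, rfl⟩, hi⟩
    exact ⟨⟨i, hi⟩, rfl⟩

section ValGramSchmidt

variable {v : V → Γ₀} (e : ℕ → V)

theorem valCorrection_spec (hv : IsVectorValuation K v) {W : Submodule K V}
    (hW : (v '' W).Finite) (x : V) :
    valCorrection K v W x ∈ W ∧ IsValOrthogonal v (x + valCorrection K v W x) W :=
  Classical.epsilon_spec (hv.exists_isValOrthogonal_add hW x)

theorem finite_image_valGramSchmidtSpan (hv : IsVectorValuation K v) (n : ℕ) :
    (v '' valGramSchmidtSpan K v e n).Finite := by
  induction n with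
  | zero => simp [valGramSchmidtSpan]
  | succ n ih =>
    exact ((ih.insert _).subset
      (hv.image_sup_span_singleton_subset (valCorrection_spec hv ih (e n)).2))

theorem isValOrthogonal_valGramSchmidt (hv : IsVectorValuation K v) (n : ℕ) :
    IsValOrthogonal v (valGramSchmidt K v e n) (valGramSchmidtSpan K v e n) :=
  (valCorrection_spec hv (finite_image_valGramSchmidtSpan e hv n) (e n)).2

theorem isValuationIndependent_valGramSchmidt (hv : IsVectorValuation K v) :
    IsValuationIndependent K v (valGramSchmidt K v e) :=
  hv.isValuationIndependent_of_isValOrthogonal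
    (fun _ _ => valGramSchmidt_mem_valGramSchmidtSpan K v e)
    (isValOrthogonal_valGramSchmidt e hv)

theorem mem_valGramSchmidtSpan_succ (hv : IsVectorValuation K v) (n : ℕ) :
    e n ∈ valGramSchmidtSpan K v e (n + 1) := by
  have hcorr := (valCorrection_spec hv (finite_image_valGramSchmidtSpan e hv n) (e n)).1
  rw [← add_sub_cancel_right (e n) (valCorrection K v (valGramSchmidtSpan K v e n) (e n))]
  exact sub_mem (valGramSchmidt_mem_valGramSchmidtSpan K v e n.lt_succ_self)
    (monotone_valGramSchmidtSpan K v e n.le_succ hcorr)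

theorem span_range_valGramSchmidt (hv : IsVectorValuation K v)
    (he : span K (Set.range e) = ⊤) : span K (Set.range (valGramSchmidt K v e)) = ⊤ := by
  rw [eq_top_iff, ← he, span_le]
  rintro _ ⟨n, rfl⟩
  exact valGramSchmidtSpan_le_span K v e (n + 1) (mem_valGramSchmidtSpan_succ e hv n)

end ValGramSchmidt

/-- Brown's theorem: every ℚ-vector space of countable dimension with a
valuation `v` into `Γ ∪ {∞}` (`Γ` a linear order, `∞ = ⊤` largest; `v x = ∞` iff
`x = 0`, `v (q • x) = v x` for nonzero rational `q`, `v (x + y) ≥ min (v x, v y)`)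
admits a valuation basis: a basis `(gᵢ)` with
`v (Σ qᵢ • gᵢ) = min {v (gᵢ) : qᵢ ≠ 0}` for every finite rational combination
(the right-hand side being `inf i in s, v (qᵢ • gᵢ)`, which equals that minimum). -/
theorem brown_valuation_basis (V : Type) [AddCommGroup V] [Module ℚ V]
    (Γ : Type) [LinearOrder Γ] (v : V → WithTop Γ)
    (h0 : ∀ x : V, v x = ⊤ ↔ x = 0)
    (hsmul : ∀ q : ℚ, q ≠ 0 → ∀ x : V, v (q • x) = v x)
    (hadd : ∀ x y : V, min (v x) (v y) ≤ v (x + y))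
    (hcount : ∃ s : Set V, s.Countable ∧ Submodule.span ℚ s = ⊤) :
    ∃ (ι : Type) (g : ι → V), LinearIndependent ℚ g ∧
      Submodule.span ℚ (Set.range g) = ⊤ ∧
      ∀ (s : Finset ι) (q : ι → ℚ),
        v (∑ i ∈ s, q i • g i) = s.inf fun i => v (q i • g i) := by
  have hv : IsVectorValuation ℚ v := ⟨h0, hsmul, hadd⟩
  obtain ⟨s, hs, hspan⟩ := hcount
  obtain ⟨e, he⟩ := (hs.insert 0).exists_eq_range (Set.insert_nonempty 0 s)
  have hg := (isValuationIndependent_valGramSchmidt e hv).comp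
    (Subtype.val_injective (p := fun n => valGramSchmidt ℚ v e n ≠ 0))
  refine ⟨{n // valGramSchmidt ℚ v e n ≠ 0}, fun n => valGramSchmidt ℚ v e n,
    hv.linearIndependent_of_isValuationIndependent hg fun n => n.2, ?_, hg⟩
  rw [span_range_subtype_ne_zero]
  exact span_range_valGramSchmidt e hv (by rw [← he, span_insert_zero, hspan])
end

section
/- Let G be an ordered abelian group, γ an archimedean equivalence class of G, and x ∈ γ a positive element. Define for y ∈ γ the real number y/x := sup{r ∈ ℚ : r·x < y}, and let A_{γ,x} = {y/x : y ∈ γ} ∪ {0}. Then A_{γ,x} is a subgroup of (ℝ, +). -/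
/-- Archimedean equivalence: `x ∼ y` iff `∃ n ∈ ℕ, n|x| ≥ |y|` and `n|y| ≥ |x|`. -/
def archEquiv {G : Type*} [AddCommGroup G] [LinearOrder G] [IsOrderedAddMonoid G] (x y : G) : Prop :=
  ∃ n : ℕ, |y| ≤ n • |x| ∧ |x| ≤ n • |y|

/-- For `y` archimedean-equivalent to a positive `x`, the real number
`y/x := sup {r ∈ ℚ : r • x < y}`. -/
noncomputable def ratio {G : Type*} [AddCommGroup G] [LinearOrder G] [IsOrderedAddMonoid G] [Module ℚ G]
    (y x : G) : ℝ :=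
  sSup {r : ℝ | ∃ q : ℚ, r = (q : ℝ) ∧ q • x < y}

/-!
Every `y` with `mk x ≤ mk y` lies strictly between two rational multiples of `x`, so `y/x` is the
real number cut out by the rationals `q` with `q • x < y`, and rational cuts add: `y ↦ y/x` is an
additive map on the subgroup `{y | mk x ≤ mk y}`. On the elements of class exactly `mk x` it gives
the ratios in `A_{γ,x}`; on the elements infinitely smaller than `x` it vanishes. Hence `A_{γ,x}` is
the range of an additive group homomorphism.
-/

open ArchimedeanClass

theorem archEquiv_iff_mk_eq {G : Type*} [AddCommGroup G] [LinearOrder G] [IsOrderedAddMonoid G]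
    {x y : G} : archEquiv x y ↔ mk x = mk y := by
  rw [mk_eq_mk]
  constructor
  · rintro ⟨n, hy, hx⟩
    exact ⟨⟨n, hy⟩, ⟨n, hx⟩⟩
  · rintro ⟨⟨m, hy⟩, ⟨n, hx⟩⟩
    exact ⟨max m n, hy.trans (nsmul_le_nsmul_left (abs_nonneg x) (le_max_left m n)),
      hx.trans (nsmul_le_nsmul_left (abs_nonneg y) (le_max_right m n))⟩

section RationalCuts

variable {G : Type*} [AddCommGroup G] [LinearOrder G] [IsOrderedAddMonoid G] [Module ℚ G]
  {x y z : G}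

instance : IsOrderedModule ℚ G :=
  .of_smul_nonneg fun q hq a ha => by
    have hden : 0 ≤ q.den • (q • a) := by
      rw [← Nat.cast_smul_eq_nsmul ℚ, smul_smul, Rat.den_mul_eq_num, Int.cast_smul_eq_zsmul]
      exact zsmul_nonneg ha (Rat.num_nonneg.2 hq)
    exact (nsmul_nonneg_iff q.den_ne_zero).1 hden

instance : PosSMulStrictMono ℚ G := PosSMulMono.toPosSMulStrictMono

theorem ratio_eq_of_forall_rat {r : ℝ} (hlt : ∀ q : ℚ, (q : ℝ) < r → q • x < y)
    (hgt : ∀ q : ℚ, r < q → y < q • x) : ratio y x = r := by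
  have hlub : IsLUB {r : ℝ | ∃ q : ℚ, r = (q : ℝ) ∧ q • x < y} r := by
    refine ⟨?_, fun b hb => le_of_forall_rat_lt_imp_le fun q hq => hb ⟨q, rfl, hlt q hq⟩⟩
    rintro _ ⟨q, rfl, hq⟩
    exact le_of_not_gt fun h => lt_asymm hq (hgt q h)
  obtain ⟨q, hq⟩ := exists_rat_lt r
  exact hlub.csSup_eq ⟨q, q, rfl, hlt q hq⟩

theorem exists_abs_lt_rat_smul (hx : 0 < x) (hy : mk x ≤ mk y) : ∃ q : ℚ, |y| < q • x := by
  obtain ⟨n, hn⟩ := (mk_le_mk_iff_lt hx.ne').1 hy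
  exact ⟨n, by rwa [Nat.cast_smul_eq_nsmul, ← abs_of_pos hx]⟩

theorem smul_lt_of_lt_ratio (hx : 0 < x) (hy : mk x ≤ mk y) {q : ℚ} (h : (q : ℝ) < ratio y x) :
    q • x < y := by
  obtain ⟨q₀, hq₀⟩ := exists_abs_lt_rat_smul hx hy
  have hne : {r : ℝ | ∃ q : ℚ, r = (q : ℝ) ∧ q • x < y}.Nonempty :=
    ⟨_, -q₀, rfl, by rw [neg_smul]; exact (abs_lt.1 hq₀).1⟩
  obtain ⟨_, ⟨q', rfl, hq'⟩, hqq'⟩ := exists_lt_of_lt_csSup hne h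
  exact (smul_lt_smul_of_pos_right (by exact_mod_cast hqq') hx).trans hq'

theorem lt_smul_of_ratio_lt (hx : 0 < x) (hy : mk x ≤ mk y) {q : ℚ} (h : ratio y x < q) :
    y < q • x := by
  obtain ⟨q₀, hq₀⟩ := exists_abs_lt_rat_smul hx hy
  have hbdd : BddAbove {r : ℝ | ∃ q : ℚ, r = (q : ℝ) ∧ q • x < y} := by
    refine ⟨q₀, ?_⟩
    rintro _ ⟨q, rfl, hq⟩
    exact_mod_cast (lt_of_smul_lt_smul_right (hq.trans ((le_abs_self y).trans_lt hq₀)) hx.le).le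
  obtain ⟨q', hq', hq'q⟩ := exists_rat_btwn h
  by_contra! hle
  have hmem : q' • x < y := (smul_lt_smul_of_pos_right (by exact_mod_cast hq'q) hx).trans_le hle
  exact (le_csSup hbdd ⟨q', rfl, hmem⟩).not_gt hq'

theorem ratio_add (hx : 0 < x) (hy : mk x ≤ mk y) (hz : mk x ≤ mk z) :
    ratio (y + z) x = ratio y x + ratio z x := by
  refine ratio_eq_of_forall_rat (fun q hq => ?_) (fun q hq => ?_)
  · obtain ⟨q₁, hq₁, hq₁y⟩ := exists_rat_btwn (show (q : ℝ) - ratio z x < ratio y x by linarith)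
    calc q • x = q₁ • x + (q - q₁) • x := by rw [← add_smul, add_sub_cancel]
      _ < y + z := add_lt_add (smul_lt_of_lt_ratio hx hy hq₁y)
          (smul_lt_of_lt_ratio hx hz (by push_cast; linarith))
  · obtain ⟨q₁, hq₁y, hq₁⟩ := exists_rat_btwn (show ratio y x < q - ratio z x by linarith)
    calc y + z < q₁ • x + (q - q₁) • x := add_lt_add (lt_smul_of_ratio_lt hx hy hq₁y)
          (lt_smul_of_ratio_lt hx hz (by push_cast; linarith))
      _ = q • x := by rw [← add_smul, add_sub_cancel]

theorem ratio_eq_zero_of_mk_lt (hx : 0 < x) (hy : mk x < mk y) : ratio y x = 0 := by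
  have habs {q : ℚ} (hq : 0 < q) : |y| < q • x :=
    lt_of_mk_lt_mk_of_nonneg (by rwa [mk_smul x hq.ne', mk_abs]) (smul_pos hq hx).le
  refine ratio_eq_of_forall_rat (fun q hq => ?_) (fun q hq => ?_)
  · have := (abs_lt.1 (habs (q := -q) (by exact_mod_cast neg_pos.2 hq))).1
    rwa [neg_smul, neg_neg] at this
  · exact (abs_lt.1 (habs (by exact_mod_cast hq))).2

noncomputable def ratioAddMonoidHom (hx : 0 < x) : closedBallAddSubgroup (mk x) →+ ℝ :=
  AddMonoidHom.mk' (fun y => ratio (y : G) x) fun y z =>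
    ratio_add hx (mem_closedBallAddSubgroup_iff.1 y.2) (mem_closedBallAddSubgroup_iff.1 z.2)

end RationalCuts

/-- for a positive `x` in an (divisible) ordered abelian group with
archimedean class `γ = [x]`, the set `A_{γ,x} = {y/x : y ∈ γ} ∪ {0}` is a subgroup
of `(ℝ, +)`. -/
theorem archComponent_addSubgroup (G : Type*) [AddCommGroup G] [LinearOrder G] [IsOrderedAddMonoid G]
    [Module ℚ G] (x : G) (hx : 0 < x) :
    ∃ H : AddSubgroup ℝ,
      (H : Set ℝ) = {r : ℝ | ∃ y : G, archEquiv x y ∧ ratio y x = r} ∪ {0} := by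
  refine ⟨(ratioAddMonoidHom hx).range, Set.ext fun r => ?_⟩
  constructor
  · rintro ⟨⟨y, hy⟩, rfl⟩
    rcases (mem_closedBallAddSubgroup_iff.1 hy).eq_or_lt with h | h
    · exact Or.inl ⟨y, archEquiv_iff_mk_eq.2 h, rfl⟩
    · exact Or.inr (ratio_eq_zero_of_mk_lt hx h)
  · rintro (⟨y, hy, rfl⟩ | rfl)
    · exact ⟨⟨y, mem_closedBallAddSubgroup_iff.2 (archEquiv_iff_mk_eq.1 hy).le⟩, rfl⟩
    · exact zero_mem _
end

section
/- Every archimedean ordered abelian group embeds (as an ordered group) into (ℝ, +, 0, <). (Hölder's theorem.) -/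
/-- Hölder's theorem: every archimedean ordered abelian group embeds,
as an ordered group, into `(ℝ, +, 0, <)`. -/
theorem holder_embedding (G : Type*) [AddCommGroup G] [LinearOrder G] [IsOrderedAddMonoid G] [Archimedean G] :
    ∃ f : G →+ ℝ, StrictMono f := by
  obtain ⟨f, hf⟩ := Archimedean.exists_orderAddMonoidHom_real_injective G
  exact ⟨f, f.monotone'.strictMono_of_injective hf⟩
end

section
/- If φ: (S, +, 0, <) → (K, +, 0, <) is an ordered group isomorphism between two subgroups S, K of ℝ, each containing 1 and closed under multiplication and inversion of nonzero elements (i.e., subfields of ℝ), then S = K and the identity map is a field isomorphism from S to K. In particular, φ(x) = r·x for some real r with r ∈ K and 1/r ∈ S. -/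
/-!
A monotone additive map on a subfield `S` of `ℝ` is `ℚ`-linear, so it is multiplication by
`r = φ 1` on the rationals; since `ℚ` is dense in `ℝ`, monotonicity squeezes every other value
onto the same line. Then `r = φ 1 ∈ K` and `r⁻¹ = φ⁻¹ 1 ∈ S`, and multiplying by `r` or `r⁻¹`
moves elements between `S` and `K`, which forces `S = K`.
-/

theorem AddMonoidHom.le_map_one_mul_of_monotone {S : Subfield ℝ} (f : S →+ ℝ) (hf : Monotone f)
    (x : S) : f x ≤ f 1 * x := by
  have map_rat (q : ℚ) : f q = q * f 1 := by
    rw [← Rat.smul_one_eq_cast, map_rat_smul, Rat.smul_def]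
  have above (q : ℚ) (hq : (x : ℝ) < q) : f x ≤ q * f 1 :=
    map_rat q ▸ hf (show x ≤ (q : S) by exact_mod_cast hq.le)
  rcases (show (0 : ℝ) ≤ f 1 from map_zero f ▸ hf zero_le_one).eq_or_lt with hc | hc
  · obtain ⟨q, hq⟩ := exists_rat_gt (x : ℝ)
    simpa [← hc] using above q hq
  · rw [mul_comm, ← div_le_iff₀ hc]
    exact le_of_forall_lt_rat_imp_le fun q hq ↦ (div_le_iff₀ hc).2 (above q hq)

theorem AddMonoidHom.eq_map_one_mul_of_monotone {S : Subfield ℝ} (f : S →+ ℝ) (hf : Monotone f)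
    (x : S) : f x = f 1 * x := by
  refine (f.le_map_one_mul_of_monotone hf x).antisymm ?_
  simpa using f.le_map_one_mul_of_monotone hf (-x)

namespace Subfield

variable {F : Type*} [Field F] {S K : Subfield F} {φ : S ≃+ K} {r : F}

theorem mem_of_addEquiv_eq_mul (hφ : ∀ x : S, (φ x : F) = r * x) : r ∈ K := by
  have h : (φ 1 : F) = r := by simpa using hφ 1
  exact h ▸ (φ 1).2

theorem inv_mem_of_addEquiv_eq_mul (hφ : ∀ x : S, (φ x : F) = r * x) : r⁻¹ ∈ S := by
  have h : r * (φ.symm 1 : F) = 1 := by simpa using (hφ (φ.symm 1)).symm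
  exact inv_eq_of_mul_eq_one_right h ▸ (φ.symm 1).2

theorem eq_of_addEquiv_eq_mul (hφ : ∀ x : S, (φ x : F) = r * x) : S = K := by
  have hr : r ≠ 0 := by rintro rfl; simpa using hφ (φ.symm 1)
  ext x
  constructor
  · intro hx
    have hrx : r * x ∈ K := hφ ⟨x, hx⟩ ▸ (φ ⟨x, hx⟩).2
    simpa [hr] using K.mul_mem (K.inv_mem (mem_of_addEquiv_eq_mul hφ)) hrx
  · intro hx
    have hxr : x = r * φ.symm ⟨x, hx⟩ := by simpa using hφ (φ.symm ⟨x, hx⟩)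
    exact hxr ▸ S.mul_mem (by simpa using S.inv_mem (inv_mem_of_addEquiv_eq_mul hφ))
      (φ.symm ⟨x, hx⟩).2

end Subfield

/-- if `φ : (S, +, 0, <) ≃ (K, +, 0, <)` is an ordered additive group
isomorphism between two subfields `S, K` of `ℝ`, then `S = K`, the identity map is a
field isomorphism from `S` to `K`, and `φ` is multiplication by some real `r` with
`r ∈ K` and `r⁻¹ ∈ S`. -/
theorem orderedGroupIso_subfields (S K : Subfield ℝ) (φ : S ≃+ K)
    (hφ : StrictMono φ) :
    S = K ∧ ∃ r : ℝ, r ∈ K ∧ r⁻¹ ∈ S ∧ ∀ x : S, (φ x : ℝ) = r * (x : ℝ) := by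
  have hlin : ∀ x : S, (φ x : ℝ) = (φ 1 : ℝ) * x :=
    (K.subtype.toAddMonoidHom.comp φ.toAddMonoidHom).eq_map_one_mul_of_monotone
      (Subtype.mono_coe _ |>.comp hφ.monotone)
  exact ⟨Subfield.eq_of_addEquiv_eq_mul hlin, φ 1, Subfield.mem_of_addEquiv_eq_mul hlin,
    Subfield.inv_mem_of_addEquiv_eq_mul hlin, hlin⟩
end

section
/- Let G be a divisible ordered abelian group whose value set Γ (under the natural valuation) is a dense linear order without endpoints, and whose archimedean components are all equal to ℝ. Then for every proper cut (B, C) of a finite-dimensional divisible subgroup G′ ⊆ G with the property that the cut is 'group transcendental' over G′ (i.e., after translating by the element d₀ of G′ closest in valuation, the sets Δ₁ = {v(c − d₀) : c ∈ C} and Δ₂ = {v(b − d₀) : b ∈ B, b > d₀} satisfy Δ₁ < Δ₂ and define a cut in Γ not filled in v(G′)), there exists y ∈ G realizing the cut: B < y + d₀ < C. -/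
/-- `vlt x y` expresses `v x < v y` for the natural valuation `v` into the value set
`Γ` (reversed order: `v x < v y` iff `∀ n, n|y| < |x|`). -/
def vlt {G : Type*} [AddCommGroup G] [LinearOrder G] [IsOrderedAddMonoid G] (x y : G) : Prop :=
  ∀ n : ℕ, n • |y| < |x|

/-!
Representatives of pairwise distinct archimedean classes are linearly independent over `ℚ`
(a nontrivial combination lies in the class of its dominant term), so the finite-dimensional
`G'` meets only finitely many classes. Hence `Δ₁` has a largest value `v (c₁ - d₀)`, and
`Δ₂ ∪ {∞}` a smallest one `v (b₁ - d₀)`. Density of `Γ` gives a class `γ` strictly between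
them, and the absolute value of any element of class `γ` lies above `B - d₀` and below `C - d₀`.
-/

open ArchimedeanClass

section

variable {G : Type*} [AddCommGroup G] [LinearOrder G] [IsOrderedAddMonoid G]

theorem vlt_iff_mk_lt {x y : G} : vlt x y ↔ mk x < mk y := .rfl

instance posSMulMono_rat [Module ℚ G] : PosSMulMono ℚ G := .of_smul_nonneg fun q hq x hx => by
  have hden : q.den • (q • x) = q.num • x := by
    rw [← Nat.cast_smul_eq_nsmul ℚ, ← Int.cast_smul_eq_zsmul ℚ, smul_smul, mul_comm,
      Rat.mul_den_eq_num]
  exact (nsmul_nonneg_iff q.den_ne_zero).1 (hden ▸ zsmul_nonneg hx (Rat.num_nonneg.2 hq))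

namespace ArchimedeanClass

theorem linearIndependent_of_strictMono_mk {K : Type*} [Ring K] [LinearOrder K]
    [IsOrderedRing K] [Archimedean K] [Module K G] [PosSMulMono K G]
    {ι : Type*} [LinearOrder ι] {x : ι → G} (hx : ∀ i, x i ≠ 0) (hmono : StrictMono (mk ∘ x)) :
    LinearIndependent K x := by
  rw [linearIndependent_iff']
  intro s g hsum i hi
  by_contra hgi
  set t := s.filter (g · ≠ 0)
  have ht : t.Nonempty := ⟨i, Finset.mem_filter.2 ⟨hi, hgi⟩⟩
  have hmk : ∀ j ∈ t, mk (g j • x j) = mk (x j) := fun j hj =>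
    mk_smul _ (Finset.mem_filter.1 hj).2
  have hsum' : ∑ j ∈ t, g j • x j = 0 := by
    rw [Finset.sum_filter_of_ne fun j _ hj => left_ne_zero_of_smul hj]
    exact hsum
  have hmin := mk_sum ht (a := fun j => g j • x j) fun j hj k hk hjk => by
    simpa only [Function.comp_apply, hmk j hj, hmk k hk] using hmono hjk
  rw [hsum', mk_zero, hmk _ (Finset.min'_mem t ht), eq_comm, mk_eq_top_iff] at hmin
  exact hx _ hmin

theorem finite_mk_image_of_finite {K : Type*} [Field K] [LinearOrder K]
    [IsOrderedRing K] [Archimedean K] [Module K G] [PosSMulMono K G]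
    (V : Submodule K G) [Module.Finite K V] : (mk '' (V : Set G)).Finite := by
  have hrep : ∀ c : ↥(mk '' ((V : Set G) \ {0})), ∃ x : V, (x : G) ≠ 0 ∧ mk (x : G) = c := by
    rintro ⟨_, x, ⟨hxV, hx0⟩, rfl⟩
    exact ⟨⟨x, hxV⟩, hx0, rfl⟩
  choose r hr0 hrmk using hrep
  have hli : LinearIndependent K r := .of_comp V.subtype <|
    linearIndependent_of_strictMono_mk hr0 fun c d hcd => by
      simpa only [Function.comp_apply, Submodule.subtype_apply, hrmk] using
        Subtype.coe_lt_coe.2 hcd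
  have := hli.finite
  refine ((mk '' ((V : Set G) \ {0})).toFinite.insert ⊤).subset ?_
  rintro _ ⟨x, hxV, rfl⟩
  rcases eq_or_ne x 0 with rfl | hx0
  · exact Or.inl mk_zero
  · exact Or.inr ⟨x, ⟨hxV, hx0⟩, rfl⟩

theorem denselyOrdered_of_vlt
    (hdense : ∀ x y : G, x ≠ 0 → y ≠ 0 → vlt x y → ∃ z : G, z ≠ 0 ∧ vlt x z ∧ vlt z y)
    (habove : ∀ x : G, x ≠ 0 → ∃ z : G, z ≠ 0 ∧ vlt x z) :
    DenselyOrdered (ArchimedeanClass G) := by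
  refine ⟨ArchimedeanClass.ind fun x => ArchimedeanClass.ind fun y hxy => ?_⟩
  have hx : x ≠ 0 := by
    rintro rfl
    exact not_top_lt (mk_zero (M := G) ▸ hxy)
  rcases eq_or_ne y 0 with rfl | hy
  · obtain ⟨z, hz, hxz⟩ := habove x hx
    exact ⟨mk z, vlt_iff_mk_lt.1 hxz, by rwa [mk_zero, lt_top_iff_ne_top, ne_eq, mk_eq_top_iff]⟩
  · obtain ⟨z, -, hxz, hzy⟩ := hdense x y hx hy (vlt_iff_mk_lt.2 hxy)
    exact ⟨mk z, vlt_iff_mk_lt.1 hxz, vlt_iff_mk_lt.1 hzy⟩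

end ArchimedeanClass

end

theorem groupTranscendental_cut_realized_general (G : Type*)
    [AddCommGroup G] [LinearOrder G] [IsOrderedAddMonoid G] [Module ℚ G]
    (hdense : ∀ x y : G, x ≠ 0 → y ≠ 0 → vlt x y →
      ∃ z : G, z ≠ 0 ∧ vlt x z ∧ vlt z y)
    (habove : ∀ x : G, x ≠ 0 → ∃ z : G, z ≠ 0 ∧ vlt x z)
    (G' : Submodule ℚ G) (hfd : FiniteDimensional ℚ G')
    (B C : Set G) (hBsub : B ⊆ (G' : Set G)) (hCsub : C ⊆ (G' : Set G))
    (hCne : C.Nonempty)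
    (hBC : ∀ b ∈ B, ∀ c ∈ C, b < c)
    (d₀ : G) (hd₀ : d₀ ∈ B)
    (hsep : ∀ c ∈ C, ∀ b ∈ B, d₀ < b → vlt (c - d₀) (b - d₀)) :
    ∃ y : G, (∀ b ∈ B, b < y + d₀) ∧ (∀ c ∈ C, y + d₀ < c) := by
  have := denselyOrdered_of_vlt hdense habove
  let v : G → ArchimedeanClass G := fun x => mk (x - d₀)
  have hfin : ∀ s ⊆ (G' : Set G), (v '' s).Finite := fun s hs =>
    (finite_mk_image_of_finite G').subset <| by
      rintro _ ⟨x, hx, rfl⟩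
      exact ⟨x - d₀, G'.sub_mem (hs hx) (hBsub hd₀), rfl⟩
  obtain ⟨_, ⟨c₁, hc₁, rfl⟩, hc₁max⟩ :=
    Set.exists_max_image (v '' C) id (hfin C hCsub) (hCne.image v)
  obtain ⟨_, ⟨b₁, ⟨hb₁, hd₀b₁⟩, rfl⟩, hb₁min⟩ :=
    Set.exists_min_image (v '' {b ∈ B | d₀ ≤ b}) id (hfin _ fun b hb => hBsub hb.1)
      ⟨v d₀, d₀, ⟨hd₀, le_rfl⟩, rfl⟩
  have hgap : v c₁ < v b₁ := by
    rcases hd₀b₁.eq_or_lt with rfl | h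
    · simpa [v, lt_top_iff_ne_top, sub_eq_zero] using (hBC _ hb₁ _ hc₁).ne'
    · exact vlt_iff_mk_lt.1 (hsep c₁ hc₁ b₁ hb₁ h)
  obtain ⟨γ, hc₁γ, hγb₁⟩ := exists_between hgap
  obtain ⟨y, hy, rfl⟩ : ∃ y : G, 0 ≤ y ∧ mk y = γ :=
    ⟨|γ.out|, abs_nonneg _, by rw [mk_abs, mk_out]⟩
  refine ⟨y, fun b hb => sub_lt_iff_lt_add.1 ?_, fun c hc => lt_sub_iff_add_lt.1 ?_⟩
  · rcases lt_or_ge b d₀ with h | h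
    · exact (sub_neg.2 h).trans_le hy
    · exact lt_of_mk_lt_mk_of_nonneg (hγb₁.trans_le (hb₁min _ ⟨b, ⟨hb, h⟩, rfl⟩)) hy
  · exact lt_of_mk_lt_mk_of_nonneg ((hc₁max _ ⟨c, hc, rfl⟩).trans_lt hc₁γ)
      (sub_nonneg.2 (hBC _ hd₀ _ hc).le)

/-- let `G` be a divisible ordered abelian group whose value set `Γ` is
a dense linear order without endpoints and whose archimedean components all equal
`ℝ`.  Let `(B, C)` be a proper cut of a finite-dimensional divisible subgroup
`G' ⊆ G` which is group transcendental over `G'`: for `d₀ ∈ B ⊆ G'`, the sets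
`Δ₁ = {v (c - d₀) : c ∈ C}` and `Δ₂ = {v (b - d₀) : b ∈ B, b > d₀}` satisfy
`Δ₁ < Δ₂` and define a cut in `Γ` not filled in `v(G')`.  Then some `y ∈ G`
realizes the cut: `B < y + d₀ < C`. -/
theorem groupTranscendental_cut_realized (G : Type*)
    [AddCommGroup G] [LinearOrder G] [IsOrderedAddMonoid G] [Module ℚ G]
    (hdense : ∀ x y : G, x ≠ 0 → y ≠ 0 → vlt x y →
      ∃ z : G, z ≠ 0 ∧ vlt x z ∧ vlt z y)
    (hbelow : ∀ x : G, x ≠ 0 → ∃ z : G, z ≠ 0 ∧ vlt z x)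
    (habove : ∀ x : G, x ≠ 0 → ∃ z : G, z ≠ 0 ∧ vlt x z)
    (harch : ∀ x : G, 0 < x → ∀ r : ℝ, r ≠ 0 →
      ∃ y : G, archEquiv x y ∧ ratio y x = r)
    (G' : Submodule ℚ G) (hfd : FiniteDimensional ℚ G')
    (B C : Set G) (hBsub : B ⊆ (G' : Set G)) (hCsub : C ⊆ (G' : Set G))
    (hBne : B.Nonempty) (hCne : C.Nonempty)
    (hcover : B ∪ C = (G' : Set G))
    (hBC : ∀ b ∈ B, ∀ c ∈ C, b < c)
    (d₀ : G) (hd₀ : d₀ ∈ B)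
    (hsep : ∀ c ∈ C, ∀ b ∈ B, d₀ < b → vlt (c - d₀) (b - d₀))
    (hnotfilled : ¬ ∃ g ∈ G', g ≠ 0 ∧ (∀ c ∈ C, vlt (c - d₀) g) ∧
      (∀ b ∈ B, d₀ < b → vlt g (b - d₀))) :
    ∃ y : G, (∀ b ∈ B, b < y + d₀) ∧ (∀ c ∈ C, y + d₀ < c) :=
  groupTranscendental_cut_realized_general G hdense habove G' hfd B C hBsub hCsub hCne hBC d₀ hd₀
    hsep
end
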